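/- For all λ > 0 and all integers t ≥ 1, with Λ_t = 1 + λ(1+λ)^{−t}, we have log(Λ_{t−1}) / log(Λ_t) ≤ 2(1+λ). -/

import Mathlib

/-- For all `λ > 0` and integers `t ≥ 1`, with `Λ_t = 1 + λ(1+λ)^{-t}`,
we have `log(Λ_{t-1}) / log(Λ_t) ≤ 2(1+λ)`. -/
theorem stmt_16 (lam : ℝ) (hlam : 0 < lam) (t : ℕ) (ht : 1 ≤ t) :
    Real.log (1 + lam * ((1 + lam) ^ (t - 1))⁻¹) /
      Real.log (1 + lam * ((1 + lam) ^ t)⁻¹) ≤ 2 * (1 + lam) := by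
  have h1 : (0:ℝ) < 1 + lam := by linarith
  set z : ℝ := lam * ((1 + lam) ^ t)⁻¹ with hzdef
  have hpt : (0:ℝ) < (1 + lam) ^ t := pow_pos h1 t
  have hz : 0 < z := mul_pos hlam (inv_pos.mpr hpt)
  have hz1 : z < 1 := by
    rw [hzdef, mul_inv_lt_iff₀ hpt, one_mul]
    calc lam < 1 + lam := by linarith
    _ = (1 + lam) ^ 1 := (pow_one _).symm
    _ ≤ (1 + lam) ^ t := pow_le_pow_right₀ (by linarith) ht
  have hzz : lam * ((1 + lam) ^ (t - 1))⁻¹ = (1 + lam) * z := by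
    have : (1 + lam) ^ t = (1 + lam) ^ (t - 1) * (1 + lam) := by
      rw [← pow_succ, Nat.sub_add_cancel ht]
    rw [hzdef, this]
    field_simp
  rw [hzz]
  have hb : 0 < Real.log (1 + z) := Real.log_pos (by linarith)
  rw [div_le_iff₀ hb]
  have hupper : Real.log (1 + (1 + lam) * z) ≤ (1 + lam) * z := by
    have := Real.log_le_sub_one_of_pos (x := 1 + (1 + lam) * z)
      (by positivity)
    linarith
  have hlower : z / 2 ≤ Real.log (1 + z) := by
    have h := Real.one_sub_inv_le_log_of_pos (x := 1 + z) (by linarith)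
    have hinv : (1 + z)⁻¹ ≤ 1 - z / 2 := by
      rw [inv_le_iff_one_le_mul₀ (by linarith)]
      nlinarith
    linarith
  nlinarith [mul_le_mul_of_nonneg_left hlower (by linarith : (0:ℝ) ≤ 2 * (1 + lam))]
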